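/- arXiv:1803.03034 — 5 statements merged into one kernel-verified Lean document; each statement's English description precedes it below -/
import Mathlib

section
/- Let V be a real inner product space, W ⊆ V a subspace admitting an orthogonal projection onto it, p, q positive integers, and J : V → V a symmetric linear map with J² = pJ + qI. Then for every U ∈ W⊥: T(tU) + t(nU) = p·tU and N(tU) + n²U = p·nU + qU. -/
open scoped RealInnerProductSpace

/-! Since `tU + nU = JU` and `T`, `t` (resp. `N`, `n`) are the same linear map `X ↦ P_W (J X)`
(resp. `X ↦ J X - P_W (J X)`), the left-hand sides are the tangential and normal parts of
`J² U = p • J U + q • U`, and `P_W U = 0` for `U ∈ Wᗮ`. -/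

/-- The tangential part of `J X` with respect to the subspace `W`:
`T X := P_W (J X)` (also used for `t U := P_W (J U)` when `U ∈ Wᗮ`). -/
noncomputable def tang {V : Type*} [NormedAddCommGroup V] [InnerProductSpace ℝ V]
    (W : Submodule ℝ V) [Submodule.HasOrthogonalProjection W] (J : V →ₗ[ℝ] V) (X : V) : V :=
  (Submodule.orthogonalProjectionOnto W (J X) : V)

/-- The normal part of `J X` with respect to the subspace `W`:
`N X := J X − T X` (also used for `n U := J U − t U` when `U ∈ Wᗮ`). -/
noncomputable def norm' {V : Type*} [NormedAddCommGroup V] [InnerProductSpace ℝ V]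
    (W : Submodule ℝ V) [Submodule.HasOrthogonalProjection W] (J : V →ₗ[ℝ] V) (X : V) : V :=
  J X - tang W J X

section InducedStructure

variable {V : Type*} [NormedAddCommGroup V] [InnerProductSpace ℝ V]
  (W : Submodule ℝ V) [Submodule.HasOrthogonalProjection W] (J : V →ₗ[ℝ] V)

theorem tang_add (X Y : V) : tang W J (X + Y) = tang W J X + tang W J Y := by
  simp only [tang, map_add, Submodule.coe_add]

theorem norm'_add (X Y : V) : norm' W J (X + Y) = norm' W J X + norm' W J Y := by
  simp only [norm', tang_add, map_add]
  abel

theorem tang_add_norm' (X : V) : tang W J X + norm' W J X = J X :=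
  add_sub_cancel _ _

variable {W J} {a b : ℝ} (hJ2 : ∀ v : V, J (J v) = a • J v + b • v)
include hJ2

theorem tang_apply_of_sq_eq {U : V} (hU : U ∈ Wᗮ) : tang W J (J U) = a • tang W J U := by
  have hPU : W.orthogonalProjectionOnto U = 0 :=
    Submodule.orthogonalProjectionOnto_eq_zero_iff.mpr hU
  simp only [tang, hJ2, map_add, map_smul, hPU, smul_zero, add_zero, Submodule.coe_smul]

theorem norm'_apply_of_sq_eq {U : V} (hU : U ∈ Wᗮ) :
    norm' W J (J U) = a • norm' W J U + b • U := by
  rw [norm', hJ2, tang_apply_of_sq_eq hJ2 hU, norm', smul_sub]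
  abel

end InducedStructure

theorem induced_structure_identities_normal_general {V : Type*} [NormedAddCommGroup V]
    [InnerProductSpace ℝ V]
    (W : Submodule ℝ V) [Submodule.HasOrthogonalProjection W]
    (p q : ℕ)
    (J : V →ₗ[ℝ] V)
    (hJ2 : ∀ v : V, J (J v) = (p : ℝ) • J v + (q : ℝ) • v) :
    ∀ U ∈ Wᗮ,
      tang W J (tang W J U) + tang W J (norm' W J U) = (p : ℝ) • tang W J U ∧
      norm' W J (tang W J U) + norm' W J (norm' W J U) = (p : ℝ) • norm' W J U + (q : ℝ) • U := by
  intro U hU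
  rw [← tang_add, ← norm'_add, tang_add_norm']
  exact ⟨tang_apply_of_sq_eq hJ2 hU, norm'_apply_of_sq_eq hJ2 hU⟩

/-- For a symmetric metallic structure `J` (`J² = pJ + qI`) and a subspace `W`
with an orthogonal projection, for every `U ∈ Wᗮ`:
`T(tU) + t(nU) = p·tU` and `N(tU) + n²U = p·nU + qU`. -/
theorem induced_structure_identities_normal {V : Type*} [NormedAddCommGroup V]
    [InnerProductSpace ℝ V]
    (W : Submodule ℝ V) [Submodule.HasOrthogonalProjection W]
    (p q : ℕ) (hp : 0 < p) (hq : 0 < q)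
    (J : V →ₗ[ℝ] V)
    (hJsym : ∀ x y : V, ⟪J x, y⟫ = ⟪x, J y⟫)
    (hJ2 : ∀ v : V, J (J v) = (p : ℝ) • J v + (q : ℝ) • v) :
    ∀ U ∈ Wᗮ,
      tang W J (tang W J U) + tang W J (norm' W J U) = (p : ℝ) • tang W J U ∧
      norm' W J (tang W J U) + norm' W J (norm' W J U) = (p : ℝ) • norm' W J U + (q : ℝ) • U :=
  induced_structure_identities_normal_general W p q J hJ2
end

section
/- Let V be a real inner product space, W ⊆ V a subspace admitting an orthogonal projection onto it, p, q positive integers, and J : V → V a symmetric linear map with J² = pJ + qI. If W is slant with slant angle θ with respect to J, then T²X = cos²θ·(pTX + qX) for every X ∈ W. -/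
open scoped RealInnerProductSpace

/-! For `X, Y ∈ W` the symmetry of `J` and the fact that `T` is `J` followed by the
orthogonal projection give `⟪T²X, Y⟫ = ⟪TX, TY⟫`. Polarizing the slant condition turns this into
`cos²θ ⟪JX, JY⟫`, and `J² = pJ + q` rewrites `⟪JX, JY⟫ = ⟪J²X, Y⟫` as `p⟪TX, Y⟫ + q⟪X, Y⟫`.
Both sides of the claim lie in `W` and have the same inner products with all of `W`. -/

theorem real_inner_map_map_eq_of_norm_map_eq {E F G : Type*} [AddCommGroup E]
    [Module ℝ E] [NormedAddCommGroup F] [InnerProductSpace ℝ F] [NormedAddCommGroup G]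
    [InnerProductSpace ℝ G] {S : Submodule ℝ E} (f : E →ₗ[ℝ] F) (g : E →ₗ[ℝ] G) (c : ℝ)
    (h : ∀ x ∈ S, ‖f x‖ = c * ‖g x‖) {x y : E} (hx : x ∈ S) (hy : y ∈ S) :
    ⟪f x, f y⟫ = c ^ 2 * ⟪g x, g y⟫ := by
  simp only [real_inner_eq_norm_add_mul_self_sub_norm_mul_self_sub_norm_mul_self_div_two,
    ← map_add, h x hx, h y hy, h (x + y) (S.add_mem hx hy)]
  ring

theorem LinearMap.IsSymmetric.real_inner_map_map_of_sq_eq {V : Type*} [NormedAddCommGroup V]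
    [InnerProductSpace ℝ V] {J : V →ₗ[ℝ] V} (hJ : J.IsSymmetric) {p q : ℝ}
    (hJ2 : ∀ v, J (J v) = p • J v + q • v) (x y : V) :
    ⟪J x, J y⟫ = p * ⟪J x, y⟫ + q * ⟪x, y⟫ := by
  rw [← hJ, hJ2, inner_add_left, real_inner_smul_left, real_inner_smul_left]

section Tangential

variable {V : Type*} [NormedAddCommGroup V] [InnerProductSpace ℝ V]
  (W : Submodule ℝ V) [W.HasOrthogonalProjection] (J : V →ₗ[ℝ] V)

noncomputable def tangLinearMap : V →ₗ[ℝ] V :=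
  W.starProjection.toLinearMap ∘ₗ J

theorem tang_eq_starProjection (X : V) : tang W J X = W.starProjection (J X) := rfl

theorem tang_mem (X : V) : tang W J X ∈ W :=
  W.starProjection_apply_mem _

variable {W} in
theorem real_inner_tang_of_mem (X : V) {Y : V} (hY : Y ∈ W) : ⟪tang W J X, Y⟫ = ⟪J X, Y⟫ := by
  rw [tang_eq_starProjection, W.inner_starProjection_left_eq_right,
    W.starProjection_eq_self_iff.mpr hY]

end Tangential

theorem slant_T_squared_general {V : Type*} [NormedAddCommGroup V] [InnerProductSpace ℝ V]
    (W : Submodule ℝ V) [Submodule.HasOrthogonalProjection W]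
    (p q : ℕ)
    (J : V →ₗ[ℝ] V)
    (hJsym : ∀ x y : V, ⟪J x, y⟫ = ⟪x, J y⟫)
    (hJ2 : ∀ v : V, J (J v) = (p : ℝ) • J v + (q : ℝ) • v)
    (θ : ℝ)
    (hslant : ∀ X ∈ W, ‖tang W J X‖ = Real.cos θ * ‖J X‖) :
    ∀ X ∈ W,
      tang W J (tang W J X) = Real.cos θ ^ 2 • ((p : ℝ) • tang W J X + (q : ℝ) • X) := by
  intro X hX
  have hmem : Real.cos θ ^ 2 • ((p : ℝ) • tang W J X + (q : ℝ) • X) ∈ W :=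
    W.smul_mem _ (W.add_mem (W.smul_mem _ (tang_mem W J X)) (W.smul_mem _ hX))
  refine W.eq_starProjection_of_mem_of_inner_eq_zero hmem fun Y hY => ?_
  rw [inner_sub_left, sub_eq_zero]
  calc ⟪J (tang W J X), Y⟫ = ⟪tang W J Y, tang W J X⟫ := by
        rw [hJsym, real_inner_comm, real_inner_tang_of_mem J Y (tang_mem W J X)]
    _ = Real.cos θ ^ 2 * ⟪J Y, J X⟫ :=
        real_inner_map_map_eq_of_norm_map_eq (tangLinearMap W J) J _ hslant hY hX
    _ = Real.cos θ ^ 2 * (p * ⟪J X, Y⟫ + q * ⟪X, Y⟫) := by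
        rw [real_inner_comm, LinearMap.IsSymmetric.real_inner_map_map_of_sq_eq hJsym hJ2]
    _ = ⟪Real.cos θ ^ 2 • ((p : ℝ) • tang W J X + (q : ℝ) • X), Y⟫ := by
        rw [real_inner_smul_left, inner_add_left, real_inner_smul_left, real_inner_smul_left,
          real_inner_tang_of_mem J X hY]

/-- If `W` is slant with slant angle `θ` with respect to a symmetric metallic
structure `J` (`J² = pJ + qI`), then `T²X = cos²θ·(pTX + qX)` for every `X ∈ W`. -/
theorem slant_T_squared {V : Type*} [NormedAddCommGroup V] [InnerProductSpace ℝ V]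
    (W : Submodule ℝ V) [Submodule.HasOrthogonalProjection W]
    (p q : ℕ) (hp : 0 < p) (hq : 0 < q)
    (J : V →ₗ[ℝ] V)
    (hJsym : ∀ x y : V, ⟪J x, y⟫ = ⟪x, J y⟫)
    (hJ2 : ∀ v : V, J (J v) = (p : ℝ) • J v + (q : ℝ) • v)
    (θ : ℝ) (hθ : θ ∈ Set.Icc 0 (Real.pi / 2))
    (hslant : ∀ X ∈ W, ‖tang W J X‖ = Real.cos θ * ‖J X‖) :
    ∀ X ∈ W,
      tang W J (tang W J X) = Real.cos θ ^ 2 • ((p : ℝ) • tang W J X + (q : ℝ) • X) :=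
  slant_T_squared_general W p q J hJsym hJ2 θ hslant
end

section
/- Let V be a real inner product space, W ⊆ V a subspace admitting an orthogonal projection onto it, p, q positive integers, and J : V → V a symmetric linear map with J² = pJ + qI. If W is slant with slant angle θ with respect to J, then t(NX) = sin²θ·(pTX + qX) for every X ∈ W. -/
open scoped RealInnerProductSpace

/-! By polarization, the slant condition `‖T X‖ = cos θ ‖J X‖` upgrades to
`⟪T X, T Y⟫ = cos² θ ⟪J X, J Y⟫` on `W`. Since `J` is symmetric, the left side is `⟪T² X, Y⟫`
and the right side is `cos² θ ⟪J² X, Y⟫`, so `T² X = cos² θ · P_W (J² X)`. Hence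
`t (N X) = P_W (J² X) - T² X = sin² θ · P_W (J² X)`, and `J² = pJ + qI` turns
`P_W (J² X)` into `p T X + q X`. -/

section Polarization

variable {V F : Type*} [NormedAddCommGroup V] [InnerProductSpace ℝ V]
  [NormedAddCommGroup F] [InnerProductSpace ℝ F]

theorem inner_map_map_eq_sq_mul_of_norm_eq {W : Submodule ℝ V} {f g : V →ₗ[ℝ] F} {c : ℝ}
    (h : ∀ x ∈ W, ‖f x‖ = c * ‖g x‖) {x y : V} (hx : x ∈ W) (hy : y ∈ W) :
    ⟪f x, f y⟫ = c ^ 2 * ⟪g x, g y⟫ := by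
  simp only [real_inner_eq_norm_add_mul_self_sub_norm_mul_self_sub_norm_mul_self_div_two,
    ← map_add, h x hx, h y hy, h (x + y) (W.add_mem hx hy)]
  ring

end Polarization

namespace Submodule

variable {V : Type*} [NormedAddCommGroup V] [InnerProductSpace ℝ V]
  {W : Submodule ℝ V} [W.HasOrthogonalProjection]

theorem starProjection_eq_of_inner_eq {u v : V} (h : ∀ w ∈ W, ⟪u, w⟫ = ⟪v, w⟫) :
    W.starProjection u = W.starProjection v := by
  rw [← sub_eq_zero, ← map_sub, starProjection_apply_eq_zero_iff, mem_orthogonal']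
  intro w hw
  rw [inner_sub_left, h w hw, sub_self]

end Submodule

section Tangential

variable {V : Type*} [NormedAddCommGroup V] [InnerProductSpace ℝ V]
  (W : Submodule ℝ V) [W.HasOrthogonalProjection] (J : V →ₗ[ℝ] V)

theorem inner_tang_of_mem {X Y : V} (hY : Y ∈ W) : ⟪tang W J X, Y⟫ = ⟪J X, Y⟫ := by
  rw [tang_eq_starProjection, Submodule.inner_starProjection_left_eq_right,
    W.starProjection_eq_self_iff.mpr hY]

variable {W J}

theorem tang_tang_of_slant (hJsym : ∀ x y : V, ⟪J x, y⟫ = ⟪x, J y⟫) {θ : ℝ}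
    (hslant : ∀ X ∈ W, ‖tang W J X‖ = Real.cos θ * ‖J X‖) {X : V} (hX : X ∈ W) :
    tang W J (tang W J X) = Real.cos θ ^ 2 • W.starProjection (J (J X)) := by
  have hinner : ∀ Y ∈ W, ⟪tang W J X, tang W J Y⟫ = Real.cos θ ^ 2 * ⟪J X, J Y⟫ :=
    fun _ hY => inner_map_map_eq_sq_mul_of_norm_eq
      (f := (W.starProjection : V →ₗ[ℝ] V) ∘ₗ J) hslant hX hY
  rw [tang_eq_starProjection, ← map_smul]
  refine Submodule.starProjection_eq_of_inner_eq fun Y hY => ?_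
  calc ⟪J (tang W J X), Y⟫ = ⟪J Y, tang W J X⟫ := by rw [hJsym, real_inner_comm]
    _ = ⟪tang W J X, tang W J Y⟫ := by
      rw [← inner_tang_of_mem W J (tang_mem W J X), real_inner_comm]
    _ = ⟪Real.cos θ ^ 2 • J (J X), Y⟫ := by
      rw [hinner Y hY, real_inner_smul_left, hJsym (J X)]

theorem tang_norm'_of_slant (hJsym : ∀ x y : V, ⟪J x, y⟫ = ⟪x, J y⟫) {θ : ℝ}
    (hslant : ∀ X ∈ W, ‖tang W J X‖ = Real.cos θ * ‖J X‖) {X : V} (hX : X ∈ W) :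
    tang W J (norm' W J X) = Real.sin θ ^ 2 • W.starProjection (J (J X)) := by
  rw [norm', tang_eq_starProjection, map_sub, map_sub,
    ← tang_eq_starProjection W J (tang W J X), tang_tang_of_slant hJsym hslant hX,
    Real.sin_sq, sub_smul, one_smul]

end Tangential

theorem slant_tN_identity_general {V : Type*} [NormedAddCommGroup V] [InnerProductSpace ℝ V]
    (W : Submodule ℝ V) [Submodule.HasOrthogonalProjection W]
    (p q : ℕ)
    (J : V →ₗ[ℝ] V)
    (hJsym : ∀ x y : V, ⟪J x, y⟫ = ⟪x, J y⟫)
    (hJ2 : ∀ v : V, J (J v) = (p : ℝ) • J v + (q : ℝ) • v)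
    (θ : ℝ)
    (hslant : ∀ X ∈ W, ‖tang W J X‖ = Real.cos θ * ‖J X‖) :
    ∀ X ∈ W,
      tang W J (norm' W J X) = Real.sin θ ^ 2 • ((p : ℝ) • tang W J X + (q : ℝ) • X) := by
  intro X hX
  rw [tang_norm'_of_slant hJsym hslant hX, hJ2, map_add, map_smul, map_smul,
    W.starProjection_eq_self_iff.mpr hX, tang_eq_starProjection]

/-- If `W` is slant with slant angle `θ` with respect to a symmetric metallic
structure `J` (`J² = pJ + qI`), then `t(NX) = sin²θ·(pTX + qX)` for every `X ∈ W`. -/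
theorem slant_tN_identity {V : Type*} [NormedAddCommGroup V] [InnerProductSpace ℝ V]
    (W : Submodule ℝ V) [Submodule.HasOrthogonalProjection W]
    (p q : ℕ) (hp : 0 < p) (hq : 0 < q)
    (J : V →ₗ[ℝ] V)
    (hJsym : ∀ x y : V, ⟪J x, y⟫ = ⟪x, J y⟫)
    (hJ2 : ∀ v : V, J (J v) = (p : ℝ) • J v + (q : ℝ) • v)
    (θ : ℝ) (hθ : θ ∈ Set.Icc 0 (Real.pi / 2))
    (hslant : ∀ X ∈ W, ‖tang W J X‖ = Real.cos θ * ‖J X‖) :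
    ∀ X ∈ W,
      tang W J (norm' W J X) = Real.sin θ ^ 2 • ((p : ℝ) • tang W J X + (q : ℝ) • X) :=
  slant_tN_identity_general W p q J hJsym hJ2 θ hslant
end

section
/- Let V be a real inner product space, W ⊆ V a subspace admitting an orthogonal projection onto it, p, q positive integers, J : V → V a symmetric linear map with J² = pJ + qI, and D ⊆ W a subspace admitting an orthogonal projection P_D onto it. Then D is a slant distribution, i.e. there is θ_D ∈ [0, π/2] with ‖P_D(TX)‖ = cos θ_D·‖JX‖ for every X ∈ D, if and only if there exists a constant λ ∈ [0, 1] such that (P_D ∘ T)²X = λ(p·P_D(TX) + qX) for every X ∈ D; moreover, in that case λ = cos²θ_D. -/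
open scoped RealInnerProductSpace

/-- The orthogonal projection onto the subspace `D`, as a map `V → V`. -/
noncomputable def projD {V : Type*} [NormedAddCommGroup V] [InnerProductSpace ℝ V]
    (D : Submodule ℝ V) [Submodule.HasOrthogonalProjection D] (X : V) : V :=
  (Submodule.orthogonalProjectionOnto D X : V)

/-!
On `D`, the map `X ↦ P_D (T X)` is the compression `A = P_D ∘ J|_D` of `J`, which is symmetric,
and the metallic identity gives `‖J X‖² = ⟪(p A + q) X, X⟫` for `X ∈ D`. As `‖A X‖² = ⟪A² X, X⟫`,
the condition `‖A X‖² = λ ‖J X‖²` on `D` says that the symmetric operator `A² - λ (p A + q)` has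
vanishing quadratic form, i.e. that it is zero. Taking `λ = cos² θ` gives both directions and the
uniqueness.
-/

namespace Submodule

variable {𝕜 E : Type*} [RCLike 𝕜] [NormedAddCommGroup E] [InnerProductSpace 𝕜 E]
  (K : Submodule 𝕜 E) [K.HasOrthogonalProjection]

noncomputable def compression (T : E →ₗ[𝕜] E) : K →ₗ[𝕜] K :=
  K.orthogonalProjectionOnto.toLinearMap ∘ₗ T ∘ₗ K.subtype

theorem inner_compression_apply (T : E →ₗ[𝕜] E) (x y : K) :
    inner 𝕜 (K.compression T x) y = inner 𝕜 (T x) y :=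
  inner_orthogonalProjectionOnto_eq_of_mem_right y (T x)

theorem isSymmetric_compression {T : E →ₗ[𝕜] E} (hT : T.IsSymmetric) :
    (K.compression T).IsSymmetric := fun x y => by
  rw [inner_compression_apply, hT, ← inner_conj_symm x, inner_compression_apply, inner_conj_symm]

end Submodule

namespace LinearMap

variable {E : Type*} [NormedAddCommGroup E] [InnerProductSpace ℝ E]

theorem IsSymmetric.comp_self_eq_iff {A B : E →ₗ[ℝ] E} (hA : A.IsSymmetric)
    (hB : B.IsSymmetric) : A ∘ₗ A = B ↔ ∀ x, ‖A x‖ ^ 2 = ⟪B x, x⟫ := by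
  have hAA : (A ∘ₗ A).IsSymmetric := fun x y => by simp [hA _ y, hA x]
  rw [← sub_eq_zero, ← (hAA.sub hB).inner_map_self_eq_zero]
  simp [inner_sub_left, hA (A _), sub_eq_zero]

theorem IsSymmetric.norm_sq_apply_of_metallic {J : E →ₗ[ℝ] E} (hJ : J.IsSymmetric) {p q : ℝ}
    (hJ2 : ∀ v, J (J v) = p • J v + q • v) (x : E) :
    ‖J x‖ ^ 2 = p * ⟪J x, x⟫ + q * ‖x‖ ^ 2 := by
  rw [← real_inner_self_eq_norm_sq, hJ, hJ2, inner_add_right, real_inner_smul_right,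
    real_inner_smul_right, real_inner_comm, real_inner_self_eq_norm_sq]

theorem injective_of_metallic {M : Type*} [AddCommGroup M] [Module ℝ M] {J : M →ₗ[ℝ] M}
    {p q : ℝ} (hq : q ≠ 0) (hJ2 : ∀ v, J (J v) = p • J v + q • v) : Function.Injective J := by
  refine (injective_iff_map_eq_zero J).2 fun v hv => ?_
  simpa [hv, hq] using (hJ2 v).symm

end LinearMap

section Slant

variable {V : Type*} [NormedAddCommGroup V] [InnerProductSpace ℝ V] {J : V →ₗ[ℝ] V}
  {p q : ℝ} {W D : Submodule ℝ V} [W.HasOrthogonalProjection] [D.HasOrthogonalProjection]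

theorem compression_comp_self_eq_smul_iff (hJ : J.IsSymmetric)
    (hJ2 : ∀ v, J (J v) = p • J v + q • v) (l : ℝ) :
    D.compression J ∘ₗ D.compression J = l • (p • D.compression J + q • 1) ↔
      ∀ x : D, ‖D.compression J x‖ ^ 2 = l * ‖J x‖ ^ 2 := by
  have hA := D.isSymmetric_compression hJ
  have hB : (l • (p • D.compression J + q • 1)).IsSymmetric :=
    ((hA.smul (by simp)).add (LinearMap.IsSymmetric.one.smul (by simp))).smul (by simp)
  rw [hA.comp_self_eq_iff hB]
  simp only [LinearMap.smul_apply, LinearMap.add_apply, Module.End.one_apply, inner_add_left,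
    real_inner_smul_left, D.inner_compression_apply, real_inner_self_eq_norm_sq,
    Submodule.coe_norm, hJ.norm_sq_apply_of_metallic hJ2]

theorem projD_tang_eq_compression (hDW : D ≤ W) (x : D) :
    projD D (tang W J x) = D.compression J x := by
  rw [projD, tang, Submodule.coe_orthogonalProjectionOnto_apply W,
    Submodule.orthogonalProjectionOnto_starProjection_of_le hDW]
  rfl

theorem forall_projD_tang_projD_tang_eq_iff (hJ : J.IsSymmetric)
    (hJ2 : ∀ v, J (J v) = p • J v + q • v) (hDW : D ≤ W) (l : ℝ) :
    (∀ X ∈ D, projD D (tang W J (projD D (tang W J X))) =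
        l • (p • projD D (tang W J X) + q • X)) ↔
      ∀ X ∈ D, ‖projD D (tang W J X)‖ ^ 2 = l * ‖J X‖ ^ 2 := by
  have key := compression_comp_self_eq_smul_iff (D := D) hJ hJ2 l
  simp only [LinearMap.ext_iff, LinearMap.comp_apply, LinearMap.smul_apply, LinearMap.add_apply,
    Module.End.one_apply, Subtype.ext_iff, Submodule.coe_smul, Submodule.coe_add, Subtype.forall,
    Submodule.coe_norm, ← projD_tang_eq_compression hDW] at key
  exact key

end Slant

theorem slant_distribution_characterization_general {V : Type*} [NormedAddCommGroup V]
    [InnerProductSpace ℝ V]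
    (W : Submodule ℝ V) [Submodule.HasOrthogonalProjection W]
    (p q : ℕ) (hq : 0 < q)
    (J : V →ₗ[ℝ] V)
    (hJsym : ∀ x y : V, ⟪J x, y⟫ = ⟪x, J y⟫)
    (hJ2 : ∀ v : V, J (J v) = (p : ℝ) • J v + (q : ℝ) • v)
    (D : Submodule ℝ V) [Submodule.HasOrthogonalProjection D]
    (hDW : D ≤ W) :
    ((∃ θ ∈ Set.Icc 0 (Real.pi / 2),
        ∀ X ∈ D, ‖projD D (tang W J X)‖ = Real.cos θ * ‖J X‖) ↔
      (∃ l ∈ Set.Icc (0 : ℝ) 1,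
        ∀ X ∈ D, projD D (tang W J (projD D (tang W J X))) =
          l • ((p : ℝ) • projD D (tang W J X) + (q : ℝ) • X))) ∧
    (D ≠ ⊥ →
      ∀ θ ∈ Set.Icc 0 (Real.pi / 2), ∀ l ∈ Set.Icc (0 : ℝ) 1,
      (∀ X ∈ D, ‖projD D (tang W J X)‖ = Real.cos θ * ‖J X‖) →
      (∀ X ∈ D, projD D (tang W J (projD D (tang W J X))) =
        l • ((p : ℝ) • projD D (tang W J X) + (q : ℝ) • X)) →
      l = Real.cos θ ^ 2) := by
  have key := forall_projD_tang_projD_tang_eq_iff hJsym hJ2 hDW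
  have sq_of_slant : ∀ θ, (∀ X ∈ D, ‖projD D (tang W J X)‖ = Real.cos θ * ‖J X‖) →
      ∀ X ∈ D, ‖projD D (tang W J X)‖ ^ 2 = Real.cos θ ^ 2 * ‖J X‖ ^ 2 := fun θ h X hX => by
    rw [h X hX, mul_pow]
  refine ⟨⟨fun ⟨θ, _, hθ⟩ => ⟨Real.cos θ ^ 2, ⟨sq_nonneg _, Real.cos_sq_le_one θ⟩,
    (key _).2 (sq_of_slant θ hθ)⟩, ?_⟩, ?_⟩
  · rintro ⟨l, ⟨hl0, hl1⟩, hl⟩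
    have hcos : Real.cos (Real.arccos √l) = √l :=
      Real.cos_arccos (by linarith [Real.sqrt_nonneg l]) (Real.sqrt_le_one.2 hl1)
    refine ⟨Real.arccos √l,
      ⟨Real.arccos_nonneg _, Real.arccos_le_pi_div_two.2 (Real.sqrt_nonneg l)⟩, fun X hX => ?_⟩
    rw [hcos, ← Real.sqrt_sq (norm_nonneg _), (key l).1 hl X hX, Real.sqrt_mul hl0,
      Real.sqrt_sq (norm_nonneg _)]
  · intro hD θ _ l _ hθ hl
    obtain ⟨X, hX, hX0⟩ := Submodule.exists_mem_ne_zero_of_ne_bot hD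
    have hJX : J X ≠ 0 := (map_ne_zero_iff J (J.injective_of_metallic (by positivity) hJ2)).2 hX0
    exact mul_right_cancel₀ (by positivity)
      (((key l).1 hl X hX).symm.trans (sq_of_slant θ hθ X hX))

/-- A subspace `D ⊆ W` is a slant distribution for a symmetric metallic
structure `J` (i.e. there is `θ_D ∈ [0, π/2]` with `‖P_D(TX)‖ = cos θ_D·‖JX‖` on `D`)
iff there is `λ ∈ [0, 1]` with `(P_D ∘ T)²X = λ(p·P_D(TX) + qX)` on `D`;
moreover in that case (`D` containing a nonzero vector) `λ = cos²θ_D`. -/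
theorem slant_distribution_characterization {V : Type*} [NormedAddCommGroup V]
    [InnerProductSpace ℝ V]
    (W : Submodule ℝ V) [Submodule.HasOrthogonalProjection W]
    (p q : ℕ) (hp : 0 < p) (hq : 0 < q)
    (J : V →ₗ[ℝ] V)
    (hJsym : ∀ x y : V, ⟪J x, y⟫ = ⟪x, J y⟫)
    (hJ2 : ∀ v : V, J (J v) = (p : ℝ) • J v + (q : ℝ) • v)
    (D : Submodule ℝ V) [Submodule.HasOrthogonalProjection D]
    (hDW : D ≤ W) :
    ((∃ θ ∈ Set.Icc 0 (Real.pi / 2),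
        ∀ X ∈ D, ‖projD D (tang W J X)‖ = Real.cos θ * ‖J X‖) ↔
      (∃ l ∈ Set.Icc (0 : ℝ) 1,
        ∀ X ∈ D, projD D (tang W J (projD D (tang W J X))) =
          l • ((p : ℝ) • projD D (tang W J X) + (q : ℝ) • X))) ∧
    (D ≠ ⊥ →
      ∀ θ ∈ Set.Icc 0 (Real.pi / 2), ∀ l ∈ Set.Icc (0 : ℝ) 1,
      (∀ X ∈ D, ‖projD D (tang W J X)‖ = Real.cos θ * ‖J X‖) →
      (∀ X ∈ D, projD D (tang W J (projD D (tang W J X))) =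
        l • ((p : ℝ) • projD D (tang W J X) + (q : ℝ) • X)) →
      l = Real.cos θ ^ 2) :=
  slant_distribution_characterization_general W p q hq J hJsym hJ2 D hDW
end

section
/- Let V be a real inner product space, p, q positive integers, J : V → V a symmetric linear map with J² = pJ + qI, and W = D₁ ⊕ D₂ a semi-slant subspace: W admits an orthogonal projection onto it, D₁ and D₂ are mutually orthogonal subspaces with orthogonal projections P₁, P₂, J(D₁) = D₁, and D₂ is slant with slant angle θ (i.e. ‖TX‖ = cos θ·‖JX‖ for every X ∈ D₂). Then for all X, Y ∈ W: ⟨T(P₂X), T(P₂Y)⟩ = cos²θ·(p⟨T(P₂X), P₂Y⟩ + q⟨P₂X, P₂Y⟩) and ⟨NX, NY⟩ = sin²θ·(p⟨T(P₂X), P₂Y⟩ + q⟨P₂X, P₂Y⟩). -/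
open scoped RealInnerProductSpace

/-! Since `N` kills the `J`-invariant summand `D₁` and `P₂` discards it, both identities
reduce to vectors of the slant summand `D₂`. There, polarizing the slant condition gives
`⟪TX, TY⟫ = cos²θ ⟪JX, JY⟫`, Pythagoras for `JX = TX + NX` gives
`⟪NX, NY⟫ = sin²θ ⟪JX, JY⟫`, and symmetry of `J` with `J² = pJ + qI` gives
`⟪JX, JY⟫ = p ⟪TX, Y⟫ + q ⟪X, Y⟫` whenever `Y ∈ W`. -/

namespace SemiSlant

variable {V : Type*} [NormedAddCommGroup V] [InnerProductSpace ℝ V]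

theorem inner_map_map_eq_sq_mul_of_norm_eq {F G : Type*} [NormedAddCommGroup F]
    [InnerProductSpace ℝ F] [NormedAddCommGroup G] [InnerProductSpace ℝ G] {A : V →ₗ[ℝ] F}
    {B : V →ₗ[ℝ] G} {D : Submodule ℝ V} {c : ℝ}
    (h : ∀ x ∈ D, ‖A x‖ = c * ‖B x‖) {x y : V} (hx : x ∈ D) (hy : y ∈ D) :
    ⟪A x, A y⟫ = c ^ 2 * ⟪B x, B y⟫ := by
  have hxy := h (x + y) (D.add_mem hx hy)
  simp only [map_add] at hxy
  rw [real_inner_eq_norm_add_mul_self_sub_norm_mul_self_sub_norm_mul_self_div_two,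
    real_inner_eq_norm_add_mul_self_sub_norm_mul_self_sub_norm_mul_self_div_two (B x),
    hxy, h x hx, h y hy]
  ring

section TangentialNormal

variable (W : Submodule ℝ V) [W.HasOrthogonalProjection] (J : V →ₗ[ℝ] V)

theorem tang_eq_comp_apply (X : V) : tang W J X = (W.starProjection.toLinearMap ∘ₗ J) X := rfl

theorem tang_mem (X : V) : tang W J X ∈ W := W.starProjection_apply_mem (J X)

theorem norm'_mem_orthogonal (X : V) : norm' W J X ∈ Wᗮ :=
  W.sub_starProjection_mem_orthogonal (J X)

theorem norm'_sub (X Y : V) : norm' W J (X - Y) = norm' W J X - norm' W J Y := by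
  simp only [norm', tang_eq_comp_apply, map_sub]
  abel

theorem norm'_eq_zero_of_map_mem {X : V} (hX : J X ∈ W) : norm' W J X = 0 := by
  rw [norm', tang_eq_comp_apply, LinearMap.comp_apply, ContinuousLinearMap.coe_coe,
    W.starProjection_eq_self_iff.mpr hX, sub_self]

variable {W J}

theorem inner_map_eq_inner_tang {X Y : V} (hY : Y ∈ W) : ⟪J X, Y⟫ = ⟪tang W J X, Y⟫ := by
  have h : ⟪norm' W J X, Y⟫ = 0 := (W.mem_orthogonal' _).mp (norm'_mem_orthogonal W J X) Y hY
  rwa [norm', inner_sub_left, sub_eq_zero] at h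

theorem inner_norm'_norm' (X Y : V) :
    ⟪norm' W J X, norm' W J Y⟫ = ⟪J X, J Y⟫ - ⟪tang W J X, tang W J Y⟫ := by
  have hX := inner_map_eq_inner_tang (J := J) (X := X) (tang_mem W J Y)
  have hY := inner_map_eq_inner_tang (J := J) (X := Y) (tang_mem W J X)
  rw [real_inner_comm (tang W J X) (J Y), real_inner_comm (tang W J X) (tang W J Y)] at hY
  simp only [norm', inner_sub_left, inner_sub_right]
  linarith

theorem inner_map_map_of_metallic {p q : ℝ} (hJsym : ∀ x y : V, ⟪J x, y⟫ = ⟪x, J y⟫)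
    (hJ2 : ∀ v : V, J (J v) = p • J v + q • v) (X : V) {Y : V} (hY : Y ∈ W) :
    ⟪J X, J Y⟫ = p * ⟪tang W J X, Y⟫ + q * ⟪X, Y⟫ := by
  rw [← hJsym, hJ2, inner_add_left, real_inner_smul_left, real_inner_smul_left,
    inner_map_eq_inner_tang hY]

variable {D : Submodule ℝ V} {θ : ℝ}

theorem inner_tang_tang_of_slant (hslant : ∀ X ∈ D, ‖tang W J X‖ = Real.cos θ * ‖J X‖)
    {X Y : V} (hX : X ∈ D) (hY : Y ∈ D) :
    ⟪tang W J X, tang W J Y⟫ = Real.cos θ ^ 2 * ⟪J X, J Y⟫ :=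
  inner_map_map_eq_sq_mul_of_norm_eq (A := W.starProjection.toLinearMap ∘ₗ J) hslant hX hY

theorem inner_norm'_norm'_of_slant (hslant : ∀ X ∈ D, ‖tang W J X‖ = Real.cos θ * ‖J X‖)
    {X Y : V} (hX : X ∈ D) (hY : Y ∈ D) :
    ⟪norm' W J X, norm' W J Y⟫ = Real.sin θ ^ 2 * ⟪J X, J Y⟫ := by
  rw [inner_norm'_norm', inner_tang_tang_of_slant hslant hX hY, Real.sin_sq]
  ring

end TangentialNormal

theorem sub_projD_mem_of_mem_sup {D₁ D₂ : Submodule ℝ V} [D₂.HasOrthogonalProjection]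
    (horth : ∀ x ∈ D₁, ∀ y ∈ D₂, ⟪x, y⟫ = 0) {X : V} (hX : X ∈ D₁ ⊔ D₂) :
    X - projD D₂ X ∈ D₁ := by
  obtain ⟨a, ha, b, hb, rfl⟩ := Submodule.mem_sup.mp hX
  have ha' : a ∈ D₂ᗮ := (D₂.mem_orthogonal' a).mpr fun y hy => horth a ha y hy
  have hproj : projD D₂ (a + b) = b := by
    rw [projD, Submodule.coe_orthogonalProjectionOnto_apply, map_add,
      D₂.starProjection_apply_eq_zero_iff.mpr ha', D₂.starProjection_eq_self_iff.mpr hb, zero_add]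
  rwa [hproj, add_sub_cancel_right]

theorem norm'_eq_norm'_projD_of_mem_sup {W D₁ D₂ : Submodule ℝ V} [W.HasOrthogonalProjection]
    [D₂.HasOrthogonalProjection] {J : V →ₗ[ℝ] V} (horth : ∀ x ∈ D₁, ∀ y ∈ D₂, ⟪x, y⟫ = 0)
    (hJD₁ : ∀ x ∈ D₁, J x ∈ W) {X : V} (hX : X ∈ D₁ ⊔ D₂) :
    norm' W J X = norm' W J (projD D₂ X) := by
  rw [← sub_eq_zero, ← norm'_sub]
  exact norm'_eq_zero_of_map_mem W J (hJD₁ _ (sub_projD_mem_of_mem_sup horth hX))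

end SemiSlant

open SemiSlant in
theorem semislant_inner_identities_general {V : Type*} [NormedAddCommGroup V]
    [InnerProductSpace ℝ V]
    (p q : ℕ)
    (J : V →ₗ[ℝ] V)
    (hJsym : ∀ x y : V, ⟪J x, y⟫ = ⟪x, J y⟫)
    (hJ2 : ∀ v : V, J (J v) = (p : ℝ) • J v + (q : ℝ) • v)
    (W D₁ D₂ : Submodule ℝ V) [Submodule.HasOrthogonalProjection W]
    [Submodule.HasOrthogonalProjection D₂]
    (horth : ∀ x ∈ D₁, ∀ y ∈ D₂, ⟪x, y⟫ = 0)
    (hW : D₁ ⊔ D₂ = W)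
    (hinv : D₁.map J = D₁)
    (θ : ℝ)
    (hslant : ∀ X ∈ D₂, ‖tang W J X‖ = Real.cos θ * ‖J X‖) :
    ∀ X ∈ W, ∀ Y ∈ W,
      ⟪tang W J (projD D₂ X), tang W J (projD D₂ Y)⟫ =
        Real.cos θ ^ 2 * ((p : ℝ) * ⟪tang W J (projD D₂ X), projD D₂ Y⟫ +
          (q : ℝ) * ⟪projD D₂ X, projD D₂ Y⟫) ∧
      ⟪norm' W J X, norm' W J Y⟫ =
        Real.sin θ ^ 2 * ((p : ℝ) * ⟪tang W J (projD D₂ X), projD D₂ Y⟫ +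
          (q : ℝ) * ⟪projD D₂ X, projD D₂ Y⟫) := by
  have hJD₁ : ∀ x ∈ D₁, J x ∈ W := fun x hx =>
    hW ▸ Submodule.mem_sup_left (hinv ▸ Submodule.mem_map_of_mem hx)
  intro X hX Y hY
  rw [← hW] at hX hY
  have hX₂ : projD D₂ X ∈ D₂ := D₂.starProjection_apply_mem X
  have hY₂ : projD D₂ Y ∈ D₂ := D₂.starProjection_apply_mem Y
  have hJJ := inner_map_map_of_metallic hJsym hJ2 (projD D₂ X) (hW ▸ Submodule.mem_sup_right hY₂)
  rw [norm'_eq_norm'_projD_of_mem_sup horth hJD₁ hX, norm'_eq_norm'_projD_of_mem_sup horth hJD₁ hY,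
    inner_tang_tang_of_slant hslant hX₂ hY₂, inner_norm'_norm'_of_slant hslant hX₂ hY₂, hJJ]
  exact ⟨rfl, rfl⟩

/-- If `W = D₁ ⊕ D₂` is a semi-slant subspace for a symmetric metallic
structure `J` (`D₁` invariant, `D₂` slant with angle `θ ≠ 0`), then for all `X, Y ∈ W`:
`⟨T(P₂X), T(P₂Y)⟩ = cos²θ·(p⟨T(P₂X), P₂Y⟩ + q⟨P₂X, P₂Y⟩)` and
`⟨NX, NY⟩ = sin²θ·(p⟨T(P₂X), P₂Y⟩ + q⟨P₂X, P₂Y⟩)`. -/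
theorem semislant_inner_identities {V : Type*} [NormedAddCommGroup V]
    [InnerProductSpace ℝ V]
    (p q : ℕ) (hp : 0 < p) (hq : 0 < q)
    (J : V →ₗ[ℝ] V)
    (hJsym : ∀ x y : V, ⟪J x, y⟫ = ⟪x, J y⟫)
    (hJ2 : ∀ v : V, J (J v) = (p : ℝ) • J v + (q : ℝ) • v)
    (W D₁ D₂ : Submodule ℝ V) [Submodule.HasOrthogonalProjection W]
    [Submodule.HasOrthogonalProjection D₁] [Submodule.HasOrthogonalProjection D₂]
    (hD₁W : D₁ ≤ W) (hD₂W : D₂ ≤ W)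
    (horth : ∀ x ∈ D₁, ∀ y ∈ D₂, ⟪x, y⟫ = 0)
    (hW : D₁ ⊔ D₂ = W)
    (hinv : D₁.map J = D₁)
    (θ : ℝ) (hθ : θ ∈ Set.Ioc 0 (Real.pi / 2))
    (hslant : ∀ X ∈ D₂, ‖tang W J X‖ = Real.cos θ * ‖J X‖) :
    ∀ X ∈ W, ∀ Y ∈ W,
      ⟪tang W J (projD D₂ X), tang W J (projD D₂ Y)⟫ =
        Real.cos θ ^ 2 * ((p : ℝ) * ⟪tang W J (projD D₂ X), projD D₂ Y⟫ +
          (q : ℝ) * ⟪projD D₂ X, projD D₂ Y⟫) ∧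
      ⟪norm' W J X, norm' W J Y⟫ =
        Real.sin θ ^ 2 * ((p : ℝ) * ⟪tang W J (projD D₂ X), projD D₂ Y⟫ +
          (q : ℝ) * ⟪projD D₂ X, projD D₂ Y⟫) :=
  semislant_inner_identities_general p q J hJsym hJ2 W D₁ D₂ horth hW hinv θ hslant
end
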